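/- arXiv:2401.06286 — 3 statements merged into one kernel-verified Lean document; each statement's English description precedes it below -/
import Mathlib

section
/- In the field of rational functions ℂ(x12, x13, x14, x23, x24, x34), the 6×6 matrix J_B whose columns correspond to the partial derivatives of the face-volume functions indexed by B = {12, 13, 14, 123, 124, 134} (as given by the Jacobian of the parametrization of X₃) has determinant (−1/8³)·(x13 + x14 − x34)·(x12 + x14 − x24)·(x12 + x13 − x23), which is a nonzero rational function; hence B is a basis of the algebraic matroid of X₃. -/
/-!
Exchanging the rows indexed by `x23` and `x14` turns `J_B` into an upper triangular matrix with
diagonal `1, 1, 1, (x12 + x13 - x23)/8, (x12 + x14 - x24)/8, (x13 + x14 - x34)/8`; the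
transposition contributes the sign. At `x_ij = 1` every factor equals `1`.
-/

open Matrix Equiv

theorem Matrix.det_eq_neg_prod_of_isUpperTriangular_swap {R n : Type*} [CommRing R] [Fintype n]
    [LinearOrder n] (M : Matrix n n R) {i j : n} (hij : i ≠ j)
    (hM : (M.submatrix (Equiv.swap i j) id).IsUpperTriangular) :
    M.det = -∏ k, M (Equiv.swap i j k) k := by
  have hswap : (M.submatrix (Equiv.swap i j) id).det = -M.det := by
    simp [det_permute, Perm.sign_swap hij]
  rw [← neg_neg M.det, ← hswap, det_of_isUpperTriangular hM]
  rfl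

/-- The 6×6 submatrix of the (transposed) Jacobian of the parametrization of the
Heron variety `X₃` indexed by `B = {12, 13, 14, 123, 124, 134}` has determinant
`(−1/8³)·(x13 + x14 − x34)·(x12 + x14 − x24)·(x12 + x13 − x23)`, a nonzero rational
function; hence `B` is a basis of the algebraic matroid of `X₃`. -/
theorem jacobian_minor_icecream :
    (∀ x12 x13 x14 x23 x24 x34 : ℂ,
      Matrix.det !![(1 : ℂ), 0, 0, (1/8) * (-x12 + x13 + x23), (1/8) * (-x12 + x14 + x24), 0;
        0, 1, 0, (1/8) * (x12 - x13 + x23), 0, (1/8) * (-x13 + x14 + x34);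
        0, 0, 0, (1/8) * (x12 + x13 - x23), 0, 0;
        0, 0, 1, 0, (1/8) * (x12 - x14 + x24), (1/8) * (x13 - x14 + x34);
        0, 0, 0, 0, (1/8) * (x12 + x14 - x24), 0;
        0, 0, 0, 0, 0, (1/8) * (x13 + x14 - x34)] =
      (-1 / 8 ^ 3) * (x13 + x14 - x34) * (x12 + x14 - x24) * (x12 + x13 - x23)) ∧
    (∃ x12 x13 x14 x23 x24 x34 : ℂ,
      (-1 / 8 ^ 3 : ℂ) * (x13 + x14 - x34) * (x12 + x14 - x24) * (x12 + x13 - x23) ≠ 0) := by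
  refine ⟨fun x12 x13 x14 x23 x24 x34 => ?_, ⟨1, 1, 1, 1, 1, 1, by norm_num⟩⟩
  rw [det_eq_neg_prod_of_isUpperTriangular_swap _ (show (2 : Fin 6) ≠ 3 by decide)]
  · simp only [one_div, of_apply, cons_val', cons_val_fin_one, Fin.prod_univ_six, cons_val_zero,
      ne_eq, Fin.reduceEq, not_false_eq_true, swap_apply_of_ne_of_ne, cons_val_one, mul_one,
      cons_val, swap_apply_left, swap_apply_right, one_mul]
    ring
  · intro r c hcr
    fin_cases r <;> fin_cases c <;> simp_all [swap_apply_of_ne_of_ne]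
end

section
/- The subset D = {12, 13, 24, 34, 123, 234} is a dependent set of the algebraic matroid of X₃: the coordinate projection of X₃ onto these six coordinates is not dominant. Concretely, the Jacobian of the parametrization ϕ₃ of X₃ restricted to these six coordinate functions has rank at most 5 at every point. -/
-- The row of `x14` vanishes: none of the six chosen coordinates involves the edge `14`.
/-- The 6×6 minor of the Jacobian of the parametrization of `X₃` with columns
indexed by `{12, 13, 24, 34, 123, 234}` is identically zero; hence
`D = {12, 13, 24, 34, 123, 234}` is a dependent set of the algebraic matroid of `X₃`.
Rows are indexed by the edges `(12, 13, 14, 23, 24, 34)`. -/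
theorem jacobian_minor_dependent :
    ∀ x12 x13 x14 x23 x24 x34 : ℂ,
      Matrix.det !![(1 : ℂ), 0, 0, 0, (1/8) * (-x12 + x13 + x23), 0;
        0, 1, 0, 0, (1/8) * (x12 - x13 + x23), 0;
        0, 0, 0, 0, 0, 0;
        0, 0, 0, 0, (1/8) * (x12 + x13 - x23), (1/8) * (-x23 + x24 + x34);
        0, 0, 1, 0, 0, (1/8) * (x23 - x24 + x34);
        0, 0, 0, 1, 0, (1/8) * (x23 + x24 - x34)] = 0 :=
  fun _ _ _ _ _ _ => Matrix.det_eq_zero_of_row_eq_zero 2 fun j => by fin_cases j <;> rfl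
end

section
/- Let F : ℂⁿ → ℂⁿ be a polynomial map, let X ⊆ ℂⁿ × ℂᴺ be the graph of a polynomial parametrization ϕ : ℂⁿ → ℂᴺ (identifying X with its image in ℂ^{n+N} in graph coordinates), and let B be a subset of coordinates of size n. If there exists a single point q ∈ ℚⁿ at which the n×n submatrix of the Jacobian of ϕ indexed by B is invertible, then B is a basis of the algebraic matroid of the Zariski closure of the image of ϕ. -/
/-! If `P(ψ) = 0`, the chain rule gives `J · (∂P)(ψ) = 0` for the Jacobian `J = (∂ᵢψⱼ)`. When
`det J` is a nonzero polynomial, which one nonvanishing evaluation certifies, every `∂ₖP` is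
again a relation of `ψ`, of smaller degree; by induction on the degree they all vanish, so in
characteristic zero `P` is constant, hence zero. Conversely, any `n + 1` polynomials in `n`
variables are algebraically dependent because `ℂ[x₁, …, xₙ]` has transcendence degree `n`.
Over the infinite field `ℂ`, vanishing on all of `ℂⁿ` is the same as vanishing as a polynomial. -/

open MvPolynomial Matrix

namespace MvPolynomial

theorem pderiv_aeval {R σ τ : Type*} [CommSemiring R] [Fintype σ]
    (g : σ → MvPolynomial τ R) (p : MvPolynomial σ R) (i : τ) :
    pderiv i (aeval g p) = ∑ j, aeval g (pderiv j p) * pderiv i (g j) := by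
  classical
  induction p using MvPolynomial.induction_on with
  | C a => simp
  | add p q hp hq => simp only [map_add, hp, hq, add_mul, Finset.sum_add_distrib]
  | mul_X p j hp =>
    simp only [map_mul, aeval_X, pderiv_mul, hp, pderiv_X, map_add, add_mul,
      Finset.sum_add_distrib]
    simp [Pi.single_apply, Finset.mul_sum, mul_comm, mul_assoc, add_comm]

theorem totalDegree_pderiv_lt {R σ : Type*} [CommSemiring R] {p : MvPolynomial σ R}
    (hp : 0 < p.totalDegree) (i : σ) : (pderiv i p).totalDegree < p.totalDegree := by
  refine (Finset.sup_lt_iff hp).2 fun t ht => ?_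
  have hcoeff : coeff (t + Finsupp.single i 1) p ≠ 0 := by
    rw [mem_support_iff, coeff_pderiv] at ht
    exact left_ne_zero_of_mul ht
  calc (t.sum fun _ e => e) < (t.sum fun _ e => e) + 1 := Nat.lt_succ_self _
    _ = (t + Finsupp.single i 1).sum fun _ e => e := by
      rw [Finsupp.sum_add_index' (fun _ => rfl) (fun _ _ _ => rfl), Finsupp.sum_single_index rfl]
    _ ≤ p.totalDegree := le_totalDegree (mem_support_iff.2 hcoeff)

theorem eq_C_of_forall_pderiv_eq_zero {R σ : Type*} [CommSemiring R] [NoZeroDivisors R]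
    [CharZero R] {p : MvPolynomial σ R} (hp : ∀ i, pderiv i p = 0) : p = C (coeff 0 p) := by
  classical
  ext m
  rw [coeff_C]
  split_ifs with hm
  · rw [hm]
  obtain ⟨i, hi⟩ : ∃ i, m i ≠ 0 := by
    by_contra! h
    exact hm (Finsupp.ext fun j => (h j).symm)
  have hle : Finsupp.single i 1 ≤ m := Finsupp.single_le_iff.2 (Nat.one_le_iff_ne_zero.2 hi)
  have h := coeff_pderiv (i := i) p (m - Finsupp.single i 1)
  rw [hp, coeff_zero, tsub_add_cancel_of_le hle] at h
  exact (mul_eq_zero.1 h.symm).resolve_right (Nat.cast_add_one_ne_zero _)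

noncomputable def jacobian {R σ τ : Type*} [CommSemiring R] (ψ : σ → MvPolynomial τ R) :
    Matrix τ σ (MvPolynomial τ R) :=
  Matrix.of fun i j => pderiv i (ψ j)

theorem jacobian_mulVec_aeval_pderiv_eq_zero {R σ : Type*} [CommSemiring R] [Fintype σ]
    {ψ : σ → MvPolynomial σ R} {p : MvPolynomial σ R} (hp : aeval ψ p = 0) :
    jacobian ψ *ᵥ (fun j => aeval ψ (pderiv j p)) = 0 := by
  ext i
  simp only [mulVec, dotProduct, jacobian, of_apply, Pi.zero_apply, mul_comm (pderiv i _)]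
  rw [← pderiv_aeval, hp, map_zero]

theorem algebraicIndependent_of_det_jacobian_ne_zero {R σ : Type*} [CommRing R] [IsDomain R]
    [CharZero R] [Fintype σ] [DecidableEq σ] {ψ : σ → MvPolynomial σ R}
    (hdet : (jacobian ψ).det ≠ 0) : AlgebraicIndependent R ψ := by
  rw [algebraicIndependent_iff]
  intro p
  induction hd : p.totalDegree using Nat.strong_induction_on generalizing p with
  | _ d ih =>
  intro hp
  have hconst : p = C (coeff 0 p) := by
    rcases Nat.eq_zero_or_pos p.totalDegree with h0 | hpos
    · exact totalDegree_eq_zero_iff_eq_C.1 h0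
    · refine eq_C_of_forall_pderiv_eq_zero fun j => ?_
      have hker := Matrix.eq_zero_of_mulVec_eq_zero hdet (jacobian_mulVec_aeval_pderiv_eq_zero hp)
      exact ih _ (hd ▸ totalDegree_pderiv_lt hpos j) _ rfl (congrFun hker j)
  rw [hconst, aeval_C, algebraMap_eq, C_eq_zero] at hp
  rw [hconst, hp, C_0]

theorem not_algebraicIndependent_of_card_lt {R σ ι : Type*} [CommRing R] [IsDomain R]
    [Finite σ] {x : ι → MvPolynomial σ R} (h : Nat.card σ < Nat.card ι) :
    ¬ AlgebraicIndependent R x := by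
  intro hx
  have : Finite ι := Nat.finite_of_card_ne_zero (Nat.ne_zero_of_lt h)
  have hle := hx.lift_cardinalMk_le_trdeg
  rw [trdeg_of_isDomain, ← Nat.cast_card, ← Nat.cast_card] at hle
  simp only [Cardinal.lift_natCast, Nat.cast_le] at hle
  exact h.not_ge hle

theorem eval_aeval {R σ τ : Type*} [CommSemiring R] (g : σ → MvPolynomial τ R) (x : τ → R)
    (p : MvPolynomial σ R) : eval x (aeval g p) = eval (fun k => eval x (g k)) p :=
  comp_aeval_apply g (aeval x) p

end MvPolynomial

theorem monte_carlo_basis_test_general {n N : ℕ}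
    (ϕ : Fin N → MvPolynomial (Fin n) ℂ)
    (b : Fin n → Fin N)
    (q : Fin n → ℚ)
    (hjac : IsUnit (Matrix.det (Matrix.of fun i j : Fin n =>
      MvPolynomial.eval (fun k => ((q k : ℂ))) (MvPolynomial.pderiv i (ϕ (b j)))))) :
    (∀ p : MvPolynomial (Fin n) ℂ,
      (∀ x : Fin n → ℂ,
        MvPolynomial.eval (fun k => MvPolynomial.eval x (ϕ (b k))) p = 0) → p = 0) ∧
    (∀ j : Fin N, j ∉ Set.range b →
      ∃ p : MvPolynomial (Option (Fin n)) ℂ, p ≠ 0 ∧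
        ∀ x : Fin n → ℂ,
          MvPolynomial.eval
            (fun o => Option.elim o (MvPolynomial.eval x (ϕ j))
              (fun k => MvPolynomial.eval x (ϕ (b k)))) p = 0) := by
  refine ⟨fun p hp => ?_, fun j _ => ?_⟩
  · have hdet : (jacobian fun k => ϕ (b k)).det ≠ 0 := fun h0 =>
      hjac.ne_zero (by rw [← map_zero (eval _), ← h0, RingHom.map_det]; rfl)
    refine algebraicIndependent_iff.1 (algebraicIndependent_of_det_jacobian_ne_zero hdet) p ?_
    exact MvPolynomial.funext fun x => by rw [eval_aeval, hp, map_zero]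
  · have hdep := not_algebraicIndependent_of_card_lt (R := ℂ)
      (x := fun o : Option (Fin n) => o.elim (ϕ j) fun k => ϕ (b k)) (by simp)
    obtain ⟨p, hp, hp0⟩ := not_forall₂.1 (mt algebraicIndependent_iff.2 hdep)
    refine ⟨p, hp0, fun x => ?_⟩
    simp_rw [Option.elim_comp (eval x)]
    rw [← eval_aeval, hp, map_zero]

/-- Correctness of the one-sided Monte Carlo basis test: if the `B`-indexed `n×n`
submatrix of the Jacobian of a polynomial parametrization `ϕ : ℂⁿ → ℂᴺ` is
invertible at a single rational point `q`, then `B` (given by an injective listing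
`b : Fin n → Fin N` of coordinates) is a basis of the algebraic matroid of the
closure of the image of `ϕ`: the coordinates indexed by `B` are algebraically
independent on the image, and adjoining any further coordinate yields a dependent set. -/
theorem monte_carlo_basis_test {n N : ℕ}
    (ϕ : Fin N → MvPolynomial (Fin n) ℂ)
    (b : Fin n → Fin N) (hb : Function.Injective b)
    (q : Fin n → ℚ)
    (hjac : IsUnit (Matrix.det (Matrix.of fun i j : Fin n =>
      MvPolynomial.eval (fun k => ((q k : ℂ))) (MvPolynomial.pderiv i (ϕ (b j)))))) :
    (∀ p : MvPolynomial (Fin n) ℂ,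
      (∀ x : Fin n → ℂ,
        MvPolynomial.eval (fun k => MvPolynomial.eval x (ϕ (b k))) p = 0) → p = 0) ∧
    (∀ j : Fin N, j ∉ Set.range b →
      ∃ p : MvPolynomial (Option (Fin n)) ℂ, p ≠ 0 ∧
        ∀ x : Fin n → ℂ,
          MvPolynomial.eval
            (fun o => Option.elim o (MvPolynomial.eval x (ϕ j))
              (fun k => MvPolynomial.eval x (ϕ (b k)))) p = 0) :=
  monte_carlo_basis_test_general ϕ b q hjac
end
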